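/- In any BDRG A, the following are equivalent: (1) p → (q → r) ≤ (p → q) → (p → r) holds for all p, q, r ∈ A (Frege axiom (Fr)); (2) p • (u • s) ≤ (p • u) • (p • s) holds for all p, u, s ∈ A (rule (fr)). -/

import Mathlib

/-!
Both directions are pure residuation. For (fr) ⇒ (Fr), the residuation law reduces (Fr) to
`p • ((p → q) • (p → (q → r))) ≤ r`, which follows by distributing `p` with (fr) and evaluating
twice with `a • (a → b) ≤ b`. For (Fr) ⇒ (fr), with `R = (p • u) • (p • s)` it suffices to show
`u • s ≤ p → R`; (Fr) turns the obvious bound `s ≤ p → ((p • u) → R)` into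
`(p → p • u) • s ≤ p → R`, and `u ≤ p → p • u` finishes by monotonicity of `•`.
-/

/-- A bounded distributive lattice-ordered residuated groupoid (BDRG):
a bounded distributive lattice with operations `prod` (•), `imp` (→), `limp` (←)
satisfying the residuation law: a • b ≤ c ↔ b ≤ a → c ↔ a ≤ c ← b. -/
structure BDRG (A : Type*) [DistribLattice A] [BoundedOrder A] where
  prod : A → A → A
  imp : A → A → A
  limp : A → A → A
  res_imp : ∀ a b c : A, prod a b ≤ c ↔ b ≤ imp a c
  res_limp : ∀ a b c : A, prod a b ≤ c ↔ a ≤ limp c b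

namespace BDRG

variable {A : Type*} [DistribLattice A] [BoundedOrder A] (G : BDRG A)

theorem prod_imp_le (a b : A) : G.prod a (G.imp a b) ≤ b :=
  (G.res_imp a _ b).mpr le_rfl

theorem le_imp_prod (a b : A) : b ≤ G.imp a (G.prod a b) :=
  (G.res_imp a b _).mp le_rfl

theorem prod_mono_left {a a' : A} (b : A) (h : a ≤ a') : G.prod a b ≤ G.prod a' b :=
  (G.res_limp a b _).mpr (h.trans ((G.res_limp a' b _).mp le_rfl))

theorem prod_mono_right (a : A) {b b' : A} (h : b ≤ b') : G.prod a b ≤ G.prod a b' :=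
  (G.res_imp a b _).mpr (h.trans (G.le_imp_prod a b'))

theorem prod_distrib_of_imp_distrib
    (Fr : ∀ p q r : A, G.imp p (G.imp q r) ≤ G.imp (G.imp p q) (G.imp p r)) (p u s : A) :
    G.prod p (G.prod u s) ≤ G.prod (G.prod p u) (G.prod p s) := by
  set R := G.prod (G.prod p u) (G.prod p s)
  rw [G.res_imp]
  have hs : s ≤ G.imp p (G.imp (G.prod p u) R) := (G.res_imp p s _).mp (G.le_imp_prod _ _)
  have hFr : G.prod (G.imp p (G.prod p u)) s ≤ G.imp p R :=
    (G.res_imp _ s _).mpr (hs.trans (Fr p (G.prod p u) R))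
  exact (G.prod_mono_left s (G.le_imp_prod p u)).trans hFr

theorem imp_distrib_of_prod_distrib
    (fr : ∀ p u s : A, G.prod p (G.prod u s) ≤ G.prod (G.prod p u) (G.prod p s)) (p q r : A) :
    G.imp p (G.imp q r) ≤ G.imp (G.imp p q) (G.imp p r) := by
  rw [← G.res_imp, ← G.res_imp]
  calc G.prod p (G.prod (G.imp p q) (G.imp p (G.imp q r)))
      ≤ G.prod (G.prod p (G.imp p q)) (G.prod p (G.imp p (G.imp q r))) := fr _ _ _
    _ ≤ G.prod q (G.prod p (G.imp p (G.imp q r))) := G.prod_mono_left _ (G.prod_imp_le p q)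
    _ ≤ G.prod q (G.imp q r) := G.prod_mono_right _ (G.prod_imp_le p _)
    _ ≤ r := G.prod_imp_le q r

end BDRG

theorem corr_Fr_fr {A : Type*} [DistribLattice A] [BoundedOrder A] (G : BDRG A) :
    (∀ p q r : A, G.imp p (G.imp q r) ≤ G.imp (G.imp p q) (G.imp p r)) ↔
    (∀ p u s : A, G.prod p (G.prod u s) ≤ G.prod (G.prod p u) (G.prod p s)) :=
  ⟨G.prod_distrib_of_imp_distrib, G.imp_distrib_of_prod_distrib⟩
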